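/- arXiv:1510.05535 — 4 statements merged into one kernel-verified Lean document; each statement's English description precedes it below -/
import Mathlib

section
/- If A and B are alternal moulds in ARI (moulds in the u_i variables with empty-word value 0), then arit(B)·A is alternal, where arit(B)·A = amit(B)·A - anit(B)·A with (amit(B)·A)(w) = Σ_{w=abc, b,c≠∅} A(a⌈c)B(b) and (anit(B)·A)(w) = Σ_{w=abc, a,b≠∅} A(a⌉c)B(b). -/
open List

variable {K : Type*} [Field K] [CharZero K]

/-- The multiset (as a list, with multiplicity) of shuffles of two words. -/
def shuffles {α : Type*} : List α → List α → List (List α)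
  | [], v => [v]
  | u, [] => [u]
  | x :: u, y :: v =>
      ((shuffles u (y :: v)).map (x :: ·)) ++ ((shuffles (x :: u) v).map (y :: ·))
  termination_by u v => u.length + v.length

/-- A mould (at the level of evaluations) is alternal if all its shuffle sums over
pairs of nonempty words vanish. -/
def Alternal (A : List K → K) : Prop :=
  ∀ u v : List K, u ≠ [] → v ≠ [] → ((shuffles u v).map A).sum = 0

/-- mould multiplication `mu`. -/
def mu (A B : List K → K) : List K → K :=
  fun w => ∑ k ∈ Finset.range (w.length + 1), A (w.take k) * B (w.drop k)

/-- `lu(A,B) = mu(A,B) - mu(B,A)`. -/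
def lu (A B : List K → K) : List K → K :=
  fun w => mu A B w - mu B A w

/-- All decompositions of a word into two consecutive subwords. -/
def splits2 {α : Type*} (w : List α) : List (List α × List α) :=
  (List.range (w.length + 1)).map fun k => (w.take k, w.drop k)

/-- All decompositions of a word into three consecutive subwords. -/
def splits3 {α : Type*} (w : List α) : List (List α × List α × List α) :=
  (splits2 w).flatMap fun p => (splits2 p.2).map fun q => (p.1, q.1, q.2)

/-- Add `s` to the first letter of a word. -/
def addFirst (s : K) : List K → List K
  | [] => []
  | x :: xs => (x + s) :: xs

/-- Add `s` to the last letter of a word. -/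
def addLast (s : K) : List K → List K
  | [] => []
  | [x] => [x + s]
  | x :: xs => x :: addLast s xs

/-- `amit` for u-moulds: `(amit(B)·A)(w) = Σ_{w=abc, b,c≠∅} A(a⌈c) B(b)`. -/
def amitU (B A : List K → K) : List K → K := fun w =>
  ((splits3 w).map fun p =>
    match p with
    | (_, [], _) => 0
    | (_, _, []) => 0
    | (a, b, c) => A (a ++ addFirst b.sum c) * B b).sum

/-- `anit` for u-moulds: `(anit(B)·A)(w) = Σ_{w=abc, a,b≠∅} A(a⌉c) B(b)`. -/
def anitU (B A : List K → K) : List K → K := fun w =>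
  ((splits3 w).map fun p =>
    match p with
    | ([], _, _) => 0
    | (_, [], _) => 0
    | (a, b, c) => A (addLast b.sum a ++ c) * B b).sum

/-- `arit(B)·A = amit(B)·A - anit(B)·A` on u-moulds. -/
def aritU (B A : List K → K) : List K → K :=
  fun w => amitU B A w - anitU B A w

/-- the ari bracket on u-moulds. -/
def ariU (A B : List K → K) : List K → K :=
  fun w => aritU B A w + lu A B w - aritU A B w

/-- `amit` for v-moulds. -/
def amitV (B A : List K → K) : List K → K := fun w =>
  ((splits3 w).map fun p =>
    match p with
    | (_, [], _) => 0
    | (_, _, []) => 0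
    | (a, b, c0 :: c') => A (a ++ c0 :: c') * B (b.map (fun x => x - c0))).sum

/-- `anit` for v-moulds. -/
def anitV (B A : List K → K) : List K → K := fun w =>
  ((splits3 w).map fun p =>
    match p with
    | ([], _, _) => 0
    | (_, [], _) => 0
    | (a, b, c) => A (a ++ c) * B (b.map (fun x => x - a.getLastD 0))).sum

/-- `arit(B)·A = amit(B)·A - anit(B)·A` on v-moulds. -/
def aritV (B A : List K → K) : List K → K :=
  fun w => amitV B A w - anitV B A w

/-- the ari bracket on v-moulds. -/
def ariV (A B : List K → K) : List K → K :=
  fun w => aritV B A w + lu A B w - aritV A B w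

/-- `neg(A)(u_1,...,u_r) = A(-u_1,...,-u_r)`. -/
def negM (A : List K → K) : List K → K := fun w => A (w.map fun x => -x)

/-- `push(A)(u_1,...,u_r) = A(-u_1-⋯-u_r, u_1, ..., u_{r-1})`. -/
def pushM (A : List K → K) : List K → K := fun w =>
  match w with
  | [] => A []
  | _ :: _ => A ((-w.sum) :: w.dropLast)

/-- `mantar(A)(u_1,...,u_r) = (-1)^{r-1} A(u_r,...,u_1)`. -/
def mantarM (A : List K → K) : List K → K :=
  fun w => (-1 : K) ^ (w.length + 1) * A w.reverse

/-- argument list for swap from u-moulds to v-moulds: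
`(v_1,...,v_r) ↦ (v_r, v_{r-1}-v_r, ..., v_1-v_2)`. -/
def swapUargs (w : List K) : List K :=
  List.zipWith (· - ·) w.reverse (0 :: w.reverse)

/-- argument list for swap from v-moulds to u-moulds:
`(u_1,...,u_r) ↦ (u_1+⋯+u_r, u_1+⋯+u_{r-1}, ..., u_1)`. -/
def swapVargs (w : List K) : List K :=
  (List.range w.length).map fun i => (w.take (w.length - i)).sum

/-- swap, sending a u-mould to a v-mould. -/
def swapUV (A : List K → K) : List K → K := fun w => A (swapUargs w)

/-- swap, sending a v-mould to a u-mould. -/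
def swapVU (A : List K → K) : List K → K := fun w => A (swapVargs w)

/-- A constant-valued mould: its value depends only on the depth. -/
def IsConstantMould (C : List K → K) : Prop :=
  ∀ w w' : List K, w.length = w'.length → C w = C w'

/-!
Write `arit(B)·A` as the sum over `w = abc` of `(A(a⌈c) - A(a⌉c)) B(b)`. Summed over the
shuffles of `u` and `v`, deconcatenation splits `u = u₁u₂u₃` and `v = v₁v₂v₃`, with `a`, `b`, `c`
running over the shuffles of the corresponding pieces. The flexions only see `b` through its sum,
which is the same for all shuffles of `u₂` and `v₂`, so alternality of `B` leaves only the terms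
with `v₂ = ∅` or `u₂ = ∅`. In the first case the sum over the splittings `v = v₁v₃` telescopes:
the letters of `v` standing between `u₁` and `u₃` pass the flexion from one side to the other, and
only two shuffle sums of `A` against `v` survive, which vanish by alternality of `A`. The second
case is symmetric.
-/

namespace List

variable {β γ M : Type*}

theorem sum_map_sub [AddCommGroup M] (l : List β) (f g : β → M) :
    (l.map fun b => f b - g b).sum = (l.map f).sum - (l.map g).sum := by
  induction l with
  | nil => simp
  | cons b l ih => simp only [map_cons, sum_cons, ih]; abel

theorem sum_map_sum_map [AddCommMonoid M] (l₁ : List β) (l₂ : List γ) (f : β → γ → M) :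
    (l₁.map fun b => (l₂.map fun c => f b c).sum).sum
      = (l₂.map fun c => (l₁.map fun b => f b c).sum).sum := by
  simpa using Multiset.sum_map_sum_map (l₁ : Multiset β) (l₂ : Multiset γ) (f := f)

theorem sum_map_option_elim [AddCommMonoid M] (l : List β) (o : Option γ) (g : β → γ → M) :
    (l.map fun b => o.elim 0 (g b)).sum = o.elim 0 fun c => (l.map fun b => g b c).sum := by
  cases o <;> simp

end List

section Shuffles

variable {α M : Type*} [AddCommMonoid M]

@[simp] theorem shuffles_nil_left (v : List α) : shuffles [] v = [v] := by
  cases v <;> simp [shuffles]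

@[simp] theorem shuffles_nil_right (u : List α) : shuffles u [] = [u] := by
  cases u <;> simp [shuffles]

theorem shuffles_cons_cons (x y : α) (u v : List α) :
    shuffles (x :: u) (y :: v)
      = (shuffles u (y :: v)).map (x :: ·) ++ (shuffles (x :: u) v).map (y :: ·) := by
  rw [shuffles]

theorem perm_append_of_mem_shuffles {u v w : List α} (h : w ∈ shuffles u v) : w ~ u ++ v := by
  match u, v with
  | [], v => simp_all
  | x :: u, [] => simp_all
  | x :: u, y :: v =>
    simp only [shuffles_cons_cons, mem_append, mem_map] at h
    rcases h with ⟨w, hw, rfl⟩ | ⟨w, hw, rfl⟩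
    · exact (perm_append_of_mem_shuffles hw).cons x
    · exact ((perm_append_of_mem_shuffles hw).cons y).trans perm_middle.symm
termination_by u.length + v.length

theorem perm_shuffles_comm (u v : List α) : shuffles u v ~ shuffles v u := by
  match u, v with
  | [], v => simp
  | x :: u, [] => simp
  | x :: u, y :: v =>
    rw [shuffles_cons_cons, shuffles_cons_cons]
    exact (((perm_shuffles_comm u (y :: v)).map _).append
      ((perm_shuffles_comm (x :: u) v).map _)).trans perm_append_comm
termination_by u.length + v.length

theorem sum_map_shuffles_comm (u v : List α) (F : List α → M) :
    ((shuffles u v).map F).sum = ((shuffles v u).map F).sum :=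
  ((perm_shuffles_comm u v).map F).sum_eq

theorem sum_map_shuffles_head?_elim (u v : List α) (Φ : α → List α → M) :
    ((shuffles u v).map fun c => c.head?.elim 0 fun x => Φ x c.tail).sum
      = (u.head?.elim 0 fun x => ((shuffles u.tail v).map (Φ x)).sum)
        + v.head?.elim 0 fun y => ((shuffles u v.tail).map (Φ y)).sum := by
  cases u <;> cases v <;> simp [shuffles_cons_cons, Function.comp_def]

theorem sum_map_shuffles_concat_concat (p q : List α) (x y : α) (F : List α → M) :
    ((shuffles (p ++ [x]) (q ++ [y])).map F).sum
      = ((shuffles p (q ++ [y])).map fun w => F (w ++ [x])).sum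
        + ((shuffles (p ++ [x]) q).map fun w => F (w ++ [y])).sum := by
  match p, q with
  | [], [] => simp [shuffles_cons_cons, add_comm]
  | [], b :: q =>
    have ih := sum_map_shuffles_concat_concat [] q x y fun w => F (b :: w)
    simp_all [shuffles_cons_cons, Function.comp_def]
    abel
  | a :: p, [] =>
    have ih := sum_map_shuffles_concat_concat p [] x y fun w => F (a :: w)
    simp_all [shuffles_cons_cons, Function.comp_def]
    abel
  | a :: p, b :: q =>
    have ih₁ := sum_map_shuffles_concat_concat p (b :: q) x y fun w => F (a :: w)
    have ih₂ := sum_map_shuffles_concat_concat (a :: p) q x y fun w => F (b :: w)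
    simp_all [shuffles_cons_cons, Function.comp_def]
    abel
termination_by p.length + q.length

theorem sum_map_shuffles_getLast?_elim (u v : List α) (Φ : List α → α → M) :
    ((shuffles u v).map fun a => a.getLast?.elim 0 (Φ a.dropLast)).sum
      = (u.getLast?.elim 0 fun x => ((shuffles u.dropLast v).map (Φ · x)).sum)
        + v.getLast?.elim 0 fun y => ((shuffles u v.dropLast).map (Φ · y)).sum := by
  rcases u.eq_nil_or_concat with rfl | ⟨p, x, rfl⟩ <;>
    rcases v.eq_nil_or_concat with rfl | ⟨q, y, rfl⟩ <;>
    simp [sum_map_shuffles_concat_concat]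

end Shuffles

section Splits
variable {α M : Type*} [AddCommMonoid M]

@[simp] theorem splits2_nil : splits2 ([] : List α) = [([], [])] := rfl

theorem splits2_cons (x : α) (w : List α) :
    splits2 (x :: w) = ([], x :: w) :: (splits2 w).map fun q => (x :: q.1, q.2) := by
  simp [splits2, range_succ_eq_map, Function.comp_def]

theorem sum_map_splits2_eq_sum_range (w : List α) (g : List α × List α → M) :
    ((splits2 w).map g).sum = ∑ k ∈ Finset.range (w.length + 1), g (w.take k, w.drop k) := by
  rw [splits2, map_map]
  rfl

theorem sum_map_splits3 (w : List α) (g : List α × List α × List α → M) :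
    ((splits3 w).map g).sum
      = ((splits2 w).map fun p => ((splits2 p.2).map fun q => g (p.1, q.1, q.2)).sum).sum := by
  simp [splits3, flatMap_def, sum_flatten, Function.comp_def]

theorem sum_map_splits2_ite_fst_nil (w : List α) (g : List α × List α → M) :
    ((splits2 w).map fun q => if q.1 = [] then g q else 0).sum = g ([], w) := by
  cases w <;> simp [splits2_cons, Function.comp_def]

theorem sum_map_splits3_ite_nil (w : List α) (g : List α × List α × List α → M) :
    ((splits3 w).map fun p => if p.2.1 = [] then g p else 0).sum
      = ((splits2 w).map fun q => g (q.1, [], q.2)).sum := by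
  rw [sum_map_splits3]
  exact congrArg sum (map_congr_left fun p _ => sum_map_splits2_ite_fst_nil p.2 _)

-- Both sides sum `Φ p y t` over the factorizations `v = p ++ y :: t`.
theorem sum_map_splits2_head?_elim (v : List α) (Φ : List α → α → List α → M) :
    ((splits2 v).map fun q => q.2.head?.elim 0 fun y => Φ q.1 y q.2.tail).sum
      = ((splits2 v).map fun q => q.1.getLast?.elim 0 fun y => Φ q.1.dropLast y q.2).sum := by
  simp only [sum_map_splits2_eq_sum_range]
  rw [Finset.sum_range_succ, Finset.sum_range_succ']
  simp only [drop_length, take_zero, head?_nil, getLast?_nil, Option.elim_none, add_zero]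
  refine Finset.sum_congr rfl fun k hk => ?_
  have hk : k < v.length := Finset.mem_range.mp hk
  rw [drop_eq_getElem_cons hk, ← take_concat_get' v k hk]
  simp only [head?_cons, tail_cons, getLast?_concat, dropLast_concat, Option.elim_some]

end Splits

section Deconcatenation
variable {α M : Type*} [AddCommMonoid M]

theorem sum_shuffles_splits2 (u v : List α) (f : List α × List α → M) :
    ((shuffles u v).map fun w => ((splits2 w).map f).sum).sum
      = ((splits2 u).map fun p => ((splits2 v).map fun q =>
          ((shuffles p.1 q.1).map fun a =>
            ((shuffles p.2 q.2).map fun c => f (a, c)).sum).sum).sum).sum := by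
  match u, v with
  | [], v => simp
  | x :: u, [] => simp
  | x :: u, y :: v =>
    have ih₁ := sum_shuffles_splits2 u (y :: v) fun q => f (x :: q.1, q.2)
    have ih₂ := sum_shuffles_splits2 (x :: u) v fun q => f (y :: q.1, q.2)
    simp only [shuffles_cons_cons, splits2_cons, shuffles_nil_left, shuffles_nil_right,
      map_append, map_map, map_cons, map_nil, sum_append, sum_cons, sum_nil,
      Function.comp_def, sum_map_add, add_zero] at *
    rw [ih₁, ih₂]
    abel
termination_by u.length + v.length

theorem sum_shuffles_splits3 (u v : List α) (g : List α × List α × List α → M) :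
    ((shuffles u v).map fun w => ((splits3 w).map g).sum).sum
      = ((splits3 u).map fun U => ((splits3 v).map fun V =>
          ((shuffles U.1 V.1).map fun a => ((shuffles U.2.1 V.2.1).map fun b =>
            ((shuffles U.2.2 V.2.2).map fun c => g (a, b, c)).sum).sum).sum).sum).sum := by
  simp only [sum_map_splits3, sum_shuffles_splits2, sum_map_sum_map (shuffles _ _) (splits2 _)]
  exact congrArg sum (map_congr_left fun p _ => sum_map_sum_map _ _ _)

theorem sum_splits2_shuffles_append_cons (p r : List α) (z : α) (v : List α) (G : List α → M) :
    ((splits2 v).map fun q => ((shuffles p q.1).map fun a =>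
        ((shuffles r q.2).map fun c => G (a ++ z :: c)).sum).sum).sum
      = ((shuffles (p ++ z :: r) v).map G).sum := by
  match p, v with
  | p, [] => simp
  | [], y :: v =>
    have ih := sum_splits2_shuffles_append_cons [] r z v fun w => G (y :: w)
    simp_all [splits2_cons, shuffles_cons_cons, Function.comp_def]
  | x :: p, y :: v =>
    have ih₁ := sum_splits2_shuffles_append_cons p r z (y :: v) fun w => G (x :: w)
    have ih₂ := sum_splits2_shuffles_append_cons (x :: p) r z v fun w => G (y :: w)
    simp only [splits2_cons, shuffles_cons_cons, shuffles_nil_right, map_append, map_map,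
      map_cons, map_nil, sum_append, sum_cons, sum_nil, Function.comp_def, sum_map_add, add_zero,
      cons_append] at *
    rw [← add_assoc, ih₁, ih₂]
termination_by p.length + v.length

end Deconcatenation

section Flexion
variable {α M : Type*} [AddCommGroup M]

-- With `G = A` and `f = (· + b.sum)` this is `A(a⌈c) - A(a⌉c)`, each term absent when the flexion
-- would act on an empty word, as in `amitU` and `anitU`.
def flexionDiff (G : List α → M) (f : α → α) (a c : List α) : M :=
  (if c = [] then 0 else G (a ++ c.modifyHead f)) - (if a = [] then 0 else G (a.modifyLast f ++ c))

theorem flexionDiff_eq (G : List α → M) (f : α → α) (a c : List α) :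
    flexionDiff G f a c
      = (c.head?.elim 0 fun x => G (a ++ f x :: c.tail))
        - a.getLast?.elim 0 fun x => G (a.dropLast ++ f x :: c) := by
  rcases a.eq_nil_or_concat with rfl | ⟨a, x, rfl⟩ <;> cases c <;>
    simp [flexionDiff, modifyLast_concat]

def shuffleFlexionSum (G : List α → M) (f : α → α) (u₁ u₃ v₁ v₃ : List α) : M :=
  ((shuffles u₁ v₁).map fun a => ((shuffles u₃ v₃).map fun c => flexionDiff G f a c).sum).sum

theorem shuffleFlexionSum_comm (G : List α → M) (f : α → α) (u₁ u₃ v₁ v₃ : List α) :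
    shuffleFlexionSum G f u₁ u₃ v₁ v₃ = shuffleFlexionSum G f v₁ v₃ u₁ u₃ := by
  simp only [shuffleFlexionSum, sum_map_shuffles_comm u₁ v₁, sum_map_shuffles_comm u₃ v₃]

theorem sum_splits2_shuffleFlexionSum (G : List α → M) (f : α → α) (u₁ u₃ v : List α) :
    ((splits2 v).map fun q => shuffleFlexionSum G f u₁ u₃ q.1 q.2).sum
      = (u₃.head?.elim 0 fun x => ((shuffles (u₁ ++ f x :: u₃.tail) v).map G).sum)
        - u₁.getLast?.elim 0 fun x => ((shuffles (u₁.dropLast ++ f x :: u₃) v).map G).sum := by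
  -- explicit instances, since `simp` cannot find these motives by higher-order unification
  have head_split := fun a t => sum_map_shuffles_head?_elim u₃ t fun x c => G (a ++ f x :: c)
  have last_split := fun s t => sum_map_shuffles_getLast?_elim u₁ s fun a x =>
    ((shuffles u₃ t).map fun c => G (a ++ f x :: c)).sum
  have shift := sum_map_splits2_head?_elim v fun p y t =>
    ((shuffles u₁ p).map fun a => ((shuffles u₃ t).map fun c => G (a ++ f y :: c)).sum).sum
  simp only [shuffleFlexionSum, flexionDiff_eq, sum_map_sub, sum_map_option_elim, head_split,
    last_split, sum_map_add, shift, sum_splits2_shuffles_append_cons]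
  abel

end Flexion

section Moulds

omit [CharZero K]

theorem Alternal.sum_map_shuffles {B : List K → K} (hB : Alternal B) (hB0 : B [] = 0)
    (u v : List K) :
    ((shuffles u v).map B).sum = (if v = [] then B u else 0) + (if u = [] then B v else 0) := by
  by_cases hu : u = [] <;> by_cases hv : v = [] <;> simp [hu, hv, hB0, hB u v]

theorem addFirst_eq_modifyHead (s : K) (c : List K) : addFirst s c = c.modifyHead (· + s) := by
  cases c <;> rfl

theorem addLast_concat (s x : K) (a : List K) : addLast s (a ++ [x]) = a ++ [x + s] := by
  induction a with
  | nil => rfl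
  | cons y a ih => cases a <;> simp_all [addLast]

theorem addLast_eq_modifyLast (s : K) (a : List K) : addLast s a = a.modifyLast (· + s) := by
  rcases a.eq_nil_or_concat with rfl | ⟨a, x, rfl⟩
  · rfl
  · rw [concat_eq_append, addLast_concat, modifyLast_concat]

theorem aritU_eq_sum_splits3 {A B : List K → K} (hB0 : B [] = 0) :
    aritU B A = fun w => ((splits3 w).map fun p =>
      flexionDiff A (· + p.2.1.sum) p.1 p.2.2 * B p.2.1).sum := by
  funext w
  rw [aritU, amitU, anitU, ← sum_map_sub]
  refine congrArg sum (map_congr_left fun p _ => ?_)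
  rcases p with ⟨a, _ | ⟨y, b⟩, _ | ⟨z, c⟩⟩ <;> cases a <;>
    simp [flexionDiff, addFirst_eq_modifyHead, addLast_eq_modifyLast, hB0, sub_mul]

theorem Alternal.sum_shuffles_flexionDiff_mul {B : List K → K} (hB : Alternal B)
    (hB0 : B [] = 0) (A : List K → K) (u₁ u₂ u₃ v₁ v₂ v₃ : List K) :
    ((shuffles u₁ v₁).map fun a => ((shuffles u₂ v₂).map fun b => ((shuffles u₃ v₃).map fun c =>
        flexionDiff A (· + b.sum) a c * B b).sum).sum).sum
      = (if v₂ = [] then shuffleFlexionSum A (· + u₂.sum) u₁ u₃ v₁ v₃ * B u₂ else 0)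
        + (if u₂ = [] then shuffleFlexionSum A (· + v₂.sum) v₁ v₃ u₁ u₃ * B v₂ else 0) := by
  have sum_b : ∀ a, ((shuffles u₂ v₂).map fun b => ((shuffles u₃ v₃).map fun c =>
        flexionDiff A (· + b.sum) a c * B b).sum).sum
      = ((shuffles u₃ v₃).map fun c => flexionDiff A (· + (u₂.sum + v₂.sum)) a c).sum
        * ((shuffles u₂ v₂).map B).sum := by
    intro a
    rw [← sum_map_mul_left]
    refine congrArg sum (map_congr_left fun b hb => ?_)
    rw [sum_map_mul_right, (perm_append_of_mem_shuffles hb).sum_eq, sum_append]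
  calc _ = shuffleFlexionSum A (· + (u₂.sum + v₂.sum)) u₁ u₃ v₁ v₃
        * ((shuffles u₂ v₂).map B).sum := by
        simp only [sum_b]
        rw [sum_map_mul_right]
        rfl
    _ = _ := by
      rw [hB.sum_map_shuffles hB0]
      by_cases hu : u₂ = [] <;> by_cases hv : v₂ = [] <;>
        simp [hu, hv, hB0, shuffleFlexionSum_comm A _ u₁]

theorem Alternal.sum_splits2_shuffleFlexionSum_eq_zero {A : List K → K} (hA : Alternal A)
    {v : List K} (hv : v ≠ []) (f : K → K) (u₁ u₃ : List K) :
    ((splits2 v).map fun q => shuffleFlexionSum A f u₁ u₃ q.1 q.2).sum = 0 := by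
  have hAv : ∀ w, w ≠ [] → ((shuffles w v).map A).sum = 0 := fun w hw => hA w v hw hv
  rw [sum_splits2_shuffleFlexionSum]
  cases u₃.head? <;> cases u₁.getLast? <;> simp [hAv]

theorem Alternal.sum_map_splits3_ite_nil_eq_zero {A : List K → K} (hA : Alternal A)
    (B : List K → K) {v : List K} (hv : v ≠ []) (U : List K × List K × List K) :
    ((splits3 v).map fun V => if V.2.1 = [] then
        shuffleFlexionSum A (· + U.2.1.sum) U.1 U.2.2 V.1 V.2.2 * B U.2.1 else 0).sum = 0 := by
  rw [sum_map_splits3_ite_nil, sum_map_mul_right, hA.sum_splits2_shuffleFlexionSum_eq_zero hv,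
    zero_mul]

end Moulds

theorem aritU_alternal_general (A B : List K → K) (hB0 : B [] = 0)
    (hA : Alternal A) (hB : Alternal B) : Alternal (aritU B A) := by
  intro u v hu hv
  rw [aritU_eq_sum_splits3 hB0, sum_shuffles_splits3]
  simp only [hB.sum_shuffles_flexionDiff_mul hB0, sum_map_add,
    hA.sum_map_splits3_ite_nil_eq_zero B hv, zero_add]
  rw [sum_map_sum_map]
  simp only [hA.sum_map_splits3_ite_nil_eq_zero B hu, sum_map_zero]

/-- if `A` and `B` are alternal moulds in ARI, then `arit(B)·A` is alternal. -/
theorem aritU_alternal (A B : List K → K) (hA0 : A [] = 0) (hB0 : B [] = 0)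
    (hA : Alternal A) (hB : Alternal B) : Alternal (aritU B A) :=
  aritU_alternal_general A B hB0 hA hB
end

section
/- Let A be a mould with A(u_1,...,u_r)=0 for all r except a fixed odd depth r = 2s+1 ≥ 3, such that A is alternal, A is invariant under neg∘push, and neg(A) = -A (A is an odd function). Then A = 0. -/
open List

variable {K : Type*} [Field K] [CharZero K]

/-! Since `neg` is an involution and `A` is odd, `neg ∘ push` invariance says `push A = -A`.
For a word `a·t` with `t` nonempty put `v = -(a + Σ t)`. Then `push` sends `t·v` to `a·t`,
`a·t` to `v·a·(dropLast t)`, and inserting `v` at position `i < |t|` into `t` to inserting it at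
`i + 1` into `a·(dropLast t)`, each time changing the sign of `A`. So the two single-letter shuffle
relations for `v` against `t` and against `a·(dropLast t)` combine to `2 A(a·t) = 0`. Words of
length at most one are handled by the concentration in depth `2s + 1 ≥ 3`. -/

theorem shuffles_singleton_left {α : Type*} (x : α) :
    ∀ d : List α, shuffles [x] d = (List.range (d.length + 1)).map (d.insertIdx · x)
  | [] => by simp [shuffles]
  | y :: d => by
    rw [shuffles, shuffles, shuffles_singleton_left x d, List.length_cons,
      List.range_succ_eq_map (n := d.length + 1)]
    simp [Function.comp_def, List.insertIdx_succ_cons]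

theorem List.dropLast_insertIdx {α : Type*} {l : List α} {i : ℕ} (x : α) (hi : i < l.length) :
    (l.insertIdx i x).dropLast = l.dropLast.insertIdx i x := by
  rw [List.dropLast_eq_eraseIdx (i := l.length)
      (by simp [List.length_insertIdx_of_le_length hi.le]),
    List.dropLast_eq_eraseIdx (i := l.length - 1) (by omega),
    List.insertIdx_eraseIdx_of_le (by omega) (by omega), Nat.sub_add_cancel (by omega)]

theorem Alternal.sum_insertIdx_eq_zero {F : Type*} [Field F] {A : List F → F} (hal : Alternal A)
    (x : F) {d : List F} (hd : d ≠ []) :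
    ∑ i ∈ Finset.range (d.length + 1), A (d.insertIdx i x) = 0 := by
  have shuffle_sum := hal [x] d (List.cons_ne_nil x []) hd
  rwa [shuffles_singleton_left, List.map_map] at shuffle_sum

theorem pushM_of_ne_nil {F : Type*} [Field F] (A : List F → F) {w : List F} (hw : w ≠ []) :
    pushM A w = A (-w.sum :: w.dropLast) := by
  obtain ⟨x, w, rfl⟩ := List.exists_cons_of_ne_nil hw
  rfl

theorem pushM_eq_neg {F : Type*} [Field F] {A : List F → F} (hinv : negM (pushM A) = A)
    (hodd : negM A = -A) : pushM A = -A := by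
  ext w
  calc pushM A w = negM (pushM A) (w.map (-·)) := by simp [negM]
    _ = -A w := by rw [hinv, ← Pi.neg_apply, ← hodd]; rfl

theorem Alternal.eq_zero_of_pushM_eq_neg {A : List K → K} (hal : Alternal A)
    (hpush : pushM A = -A) (a : K) {t : List K} (ht : t ≠ []) : A (a :: t) = 0 := by
  set v := -(a :: t).sum with hv
  have hsum : -(v + t.sum) = a := by rw [hv, List.sum_cons]; ring
  have push_insertIdx :
      ∀ i < t.length, A (a :: t.dropLast.insertIdx i v) = -A (t.insertIdx i v) := by
    intro i hi
    have hne : t.insertIdx i v ≠ [] :=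
      List.ne_nil_of_length_pos (by simp [List.length_insertIdx_of_le_length hi.le])
    have := congrFun hpush (t.insertIdx i v)
    rwa [pushM_of_ne_nil A hne, List.sum_insertIdx hi.le (fun _ _ => AddCommute.all _ _), hsum,
      List.dropLast_insertIdx v hi] at this
  have push_concat : A (a :: t) = -A (t ++ [v]) := by
    have := congrFun hpush (t ++ [v])
    rwa [pushM_of_ne_nil A (by simp), List.sum_append, List.sum_singleton, add_comm,
      hsum, List.dropLast_concat] at this
  have push_self : A (v :: a :: t.dropLast) = -A (a :: t) := by
    have := congrFun hpush (a :: t)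
    rwa [pushM_of_ne_nil A (List.cons_ne_nil a t), List.dropLast_cons_of_ne_nil ht] at this
  have shuffle_t := hal.sum_insertIdx_eq_zero v ht
  rw [Finset.sum_range_succ, List.insertIdx_length_self] at shuffle_t
  have shuffle_at := hal.sum_insertIdx_eq_zero v (List.cons_ne_nil a t.dropLast)
  rw [List.length_cons, List.length_dropLast, Nat.sub_add_cancel (List.length_pos_iff.mpr ht),
    Finset.sum_range_succ'] at shuffle_at
  simp only [List.insertIdx_zero, List.insertIdx_succ_cons] at shuffle_at
  rw [Finset.sum_congr rfl (fun i hi => push_insertIdx i (Finset.mem_range.mp hi)), push_self,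
    Finset.sum_neg_distrib] at shuffle_at
  linear_combination (push_concat - shuffle_at - shuffle_t) / 2

/-- an alternal mould concentrated in a fixed odd depth `2s+1 ≥ 3`,
invariant under `neg∘push` and odd as a function (`neg(A) = -A`), vanishes. -/
theorem odd_concentrated_alternal_vanishes (A : List K → K) (s : ℕ) (hs : 1 ≤ s)
    (hconc : ∀ w : List K, w.length ≠ 2 * s + 1 → A w = 0)
    (hal : Alternal A)
    (hinv : ∀ w : List K, negM (pushM A) w = A w)
    (hodd : ∀ w : List K, negM A w = - A w) :
    ∀ w : List K, A w = 0 := by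
  have hpush : pushM A = -A := pushM_eq_neg (funext hinv) (funext hodd)
  rintro (_ | ⟨a, _ | ⟨b, t⟩⟩)
  · exact hconc [] (by simp)
  · exact hconc [a] (by simp; omega)
  · exact hal.eq_zero_of_pushM_eq_neg hpush a (List.cons_ne_nil b t)
end

section
/- On moulds, the identity neg∘push = mantar∘swap∘mantar∘swap holds, where swap maps u-moulds to v-moulds and back. -/
/-!
Reading a word backwards and applying the v-to-u swap turns `(u₁, …, uᵣ)` into its suffix sums
`(u₁ + ⋯ + uᵣ, u₂ + ⋯ + uᵣ, …, uᵣ)`, and the u-to-v swap of a reversed word takes consecutive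
differences. Composing the two therefore sends `(u₁, …, uᵣ)` to `(u₁ + ⋯ + uᵣ, -u₁, …, -u_{r-1})`,
which is the argument at which `neg ∘ push` evaluates `A`; the two mantar signs `(-1)^(r-1)`
cancel.
-/

open List

variable {K : Type*} [Field K] [CharZero K]

section SuffixSums

variable {G : Type*} [AddCommGroup G]

def suffixSums (w : List G) : List G :=
  (List.range w.length).map fun i => (w.drop i).sum

@[simp]
lemma length_suffixSums (w : List G) : (suffixSums w).length = w.length := by
  simp [suffixSums]

lemma zipWith_sub_suffixSums {w : List G} (hw : w ≠ []) :
    zipWith (· - ·) (suffixSums w) (0 :: suffixSums w)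
      = w.sum :: w.dropLast.map (-·) := by
  have hpos : 0 < w.length := List.length_pos_iff.mpr hw
  apply List.ext_getElem
  · simp only [List.length_zipWith, length_suffixSums, List.length_cons, List.length_map,
      List.length_dropLast]
    omega
  intro i hi _
  rcases i with _ | j
  · simp [suffixSums]
  · have hj : j < w.length := by
      simp only [List.length_zipWith, length_suffixSums, List.length_cons] at hi
      omega
    have hdrop : (w.drop j).sum = w[j] + (w.drop (j + 1)).sum := by
      rw [List.drop_eq_getElem_cons hj, List.sum_cons]
    simp [suffixSums, hdrop, List.getElem_dropLast]

end SuffixSums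

section Swap

variable {F : Type*} [Field F]

lemma swapVargs_reverse (w : List F) : swapVargs w.reverse = suffixSums w := by
  rw [swapVargs, suffixSums, List.length_reverse]
  refine List.map_congr_left fun i hi => ?_
  have hi : i < w.length := by simpa using hi
  rw [List.take_reverse, List.sum_reverse]
  congr 2
  omega

lemma swapUargs_reverse (v : List F) : swapUargs v.reverse = zipWith (· - ·) v (0 :: v) := by
  simp [swapUargs]

lemma swapUargs_reverse_swapVargs_reverse {w : List F} (hw : w ≠ []) :
    swapUargs (swapVargs w.reverse).reverse = w.sum :: w.dropLast.map (-·) := by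
  rw [swapUargs_reverse, swapVargs_reverse, zipWith_sub_suffixSums hw]

lemma mantarM_swapVU_mantarM_apply (B : List F → F) (w : List F) :
    mantarM (swapVU (mantarM B)) w = B (swapVargs w.reverse).reverse := by
  have hlen : (swapVargs w.reverse).length = w.length := by
    simp [swapVargs_reverse]
  simp only [mantarM, swapVU, hlen, ← mul_assoc, ← mul_pow, neg_mul_neg, one_mul, one_pow]

lemma negM_pushM_apply_of_ne_nil (A : List F → F) {w : List F} (hw : w ≠ []) :
    negM (pushM A) w = A (w.sum :: w.dropLast.map (-·)) := by
  obtain ⟨x, w', rfl⟩ := List.exists_cons_of_ne_nil hw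
  simp [negM, pushM, ← List.sum_neg, List.map_dropLast, add_comm]

end Swap

/-- the identity `neg ∘ push = mantar ∘ swap ∘ mantar ∘ swap` on moulds. -/
theorem neg_push_eq_mantar_swap_mantar_swap (A : List K → K) :
    negM (pushM A) = mantarM (swapVU (mantarM (swapUV A))) := by
  funext w
  rw [mantarM_swapVU_mantarM_apply, swapUV]
  rcases eq_or_ne w [] with rfl | hw
  · simp [negM, pushM, swapVargs, swapUargs]
  · rw [negM_pushM_apply_of_ne_nil A hw, swapUargs_reverse_swapVargs_reverse hw]
end

section
/- For formal power series (or polynomials) f, g, h in Lie[x,y], the derivations D_f defined by D_f(x)=0, D_f(y)=[y,f] satisfy [D_f, D_g] = D_{{f,g}}, where {f,g} = [f,g] + D_f(g) - D_g(f) is the Poisson (Ihara) bracket; consequently the Poisson bracket satisfies the Jacobi identity and makes Lie[x,y] a Lie algebra. -/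
/-!
Each `D_f` is a derivation of the associative algebra `ℚ⟨x,y⟩`, hence so is the commutator
`[D_f, D_g]`. Both `[D_f, D_g]` and `D_{f,g}` kill `x` and send `y` to `[y, {f,g}]`, so they
agree on all of `ℚ⟨x,y⟩` because `x, y` generate it.

The Jacobi identity then holds for the bracket `[f,g] + D_f g - D_g f` attached to any family of
derivations `D : L → Der L` of a Lie algebra `L` with `[D_f, D_g] = D_{f,g}`: in the cyclic sum,
the terms involving `D` cancel, and what is left is the Jacobiator of `L`.
-/

open List

attribute [local instance 100] LieRing.ofAssociativeRing

/-- The noncommutative polynomial ring `ℚ⟨x,y⟩`, realized as the monoid algebra of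
the free monoid on two letters. -/
abbrev NCPoly : Type := MonoidAlgebra ℚ (FreeMonoid (Fin 2))

/-- The generator `x`. -/
noncomputable def Xg : NCPoly := MonoidAlgebra.of ℚ (FreeMonoid (Fin 2)) (FreeMonoid.of 0)

/-- The generator `y`. -/
noncomputable def Yg : NCPoly := MonoidAlgebra.of ℚ (FreeMonoid (Fin 2)) (FreeMonoid.of 1)

/-- The monomial corresponding to a word in `x,y`. -/
noncomputable def ofW (w : List (Fin 2)) : NCPoly :=
  MonoidAlgebra.of ℚ (FreeMonoid (Fin 2)) (FreeMonoid.ofList w)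

/-- The coefficient `(f|w)` of a word `w` in `f`. -/
noncomputable def coeffW (f : NCPoly) (w : List (Fin 2)) : ℚ := f.coeff (FreeMonoid.ofList w)

/-- The value of the derivation `D_f` (with `D_f(x) = 0`, `D_f(y) = [y,f] = yf - fy`)
on the monomial given by a word. -/
noncomputable def Dword (f : NCPoly) : List (Fin 2) → NCPoly
  | [] => 0
  | a :: w => (if a = 1 then Yg * f - f * Yg else 0) * ofW w
      + (MonoidAlgebra.of ℚ (FreeMonoid (Fin 2)) (FreeMonoid.of a)) * Dword f w

/-- The derivation `D_f` of `ℚ⟨x,y⟩` determined by `D_f(x) = 0`, `D_f(y) = [y,f]`. -/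
noncomputable def Dmap (f g : NCPoly) : NCPoly :=
  g.coeff.sum fun w c => c • Dword f (FreeMonoid.toList w)

/-- The Poisson (Ihara) bracket `{f,g} = [f,g] + D_f(g) - D_g(f)`. -/
noncomputable def pois (f g : NCPoly) : NCPoly :=
  f * g - g * f + Dmap f g - Dmap g f

section AssociativeDerivation

variable {R A : Type*} [CommRing R] [Ring A] [Algebra R A]

/-- Mathlib's `Derivation` requires a commutative algebra, so derivations of the noncommutative
`A` are linear maps with this property. -/
def IsDerivation (D : A →ₗ[R] A) : Prop :=
  ∀ a b, D (a * b) = D a * b + a * D b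

namespace IsDerivation

variable {D E : A →ₗ[R] A}

lemma map_one (hD : IsDerivation D) : D 1 = 0 := by
  simpa using hD 1 1

lemma map_algebraMap (hD : IsDerivation D) (r : R) : D (algebraMap R A r) = 0 := by
  rw [Algebra.algebraMap_eq_smul_one, map_smul, hD.map_one, smul_zero]

lemma eqOn_adjoin (hD : IsDerivation D) (hE : IsDerivation E) {s : Set A}
    (h : Set.EqOn D E s) : Set.EqOn D E (Algebra.adjoin R s) := fun _ hx => by
  induction hx using Algebra.adjoin_induction with
  | mem _ hx => exact h hx
  | algebraMap r => rw [hD.map_algebraMap, hE.map_algebraMap]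
  | add x y _ _ hx hy => rw [map_add, map_add, hx, hy]
  | mul x y _ _ hx hy => rw [hD, hE, hx, hy]

lemma ext_of_adjoin_eq_top (hD : IsDerivation D) (hE : IsDerivation E) {s : Set A}
    (hs : Algebra.adjoin R s = ⊤) (h : Set.EqOn D E s) : D = E :=
  LinearMap.ext fun _ => hD.eqOn_adjoin hE h (hs ▸ Algebra.mem_top)

lemma commutator (hD : IsDerivation D) (hE : IsDerivation E) :
    IsDerivation (D * E - E * D) := fun a b => by
  simp only [LinearMap.sub_apply, Module.End.mul_apply, hD _ _, hE _ _, map_add]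
  noncomm_ring

def toLieDerivation (hD : IsDerivation D) : LieDerivation R A A :=
  { D with
    leibniz' := fun a b => by
      simp only [Ring.lie_def, map_sub, hD _ _]
      noncomm_ring }

end IsDerivation

end AssociativeDerivation

section IharaBracket

variable {R L : Type*} [CommRing R] [LieRing L] [LieAlgebra R L]

def iharaBracket (D : L → LieDerivation R L L) (f g : L) : L :=
  ⁅f, g⁆ + D f g - D g f

theorem iharaBracket_jacobi (D : L → LieDerivation R L L)
    (hD : ∀ f g, ⁅D f, D g⁆ = D (iharaBracket D f g)) (f g h : L) :
    iharaBracket D f (iharaBracket D g h) + iharaBracket D g (iharaBracket D h f)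
      + iharaBracket D h (iharaBracket D f g) = 0 := by
  have hcomm : ∀ a b c, D (iharaBracket D a b) c = D a (D b c) - D b (D a c) := fun a b c => by
    rw [← hD, LieDerivation.commutator_apply]
  have hexpand : ∀ a b c, iharaBracket D a (iharaBracket D b c)
      = ⁅a, iharaBracket D b c⁆ + D a (iharaBracket D b c) - (D b (D c a) - D c (D b a)) :=
    fun a b c => by rw [iharaBracket, hcomm]
  simp only [hexpand]
  simp only [iharaBracket, map_add, map_sub, LieDerivation.apply_lie_eq_sub, lie_add, lie_sub]
  rw [← lie_jacobi f g h]
  abel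

end IharaBracket

lemma MonoidAlgebra.isDerivation_of_map_of_mul {k G : Type*} [CommRing k] [Monoid G]
    {D : MonoidAlgebra k G →ₗ[k] MonoidAlgebra k G}
    (h : ∀ m n, D (.of k G (m * n)) = D (.of k G m) * .of k G n + .of k G m * D (.of k G n)) :
    IsDerivation D := fun a b => by
  induction a using MonoidAlgebra.induction_on with
  | of m =>
    induction b using MonoidAlgebra.induction_on with
    | of n => rw [← map_mul, h]
    | add b b' hb hb' => simp only [mul_add, map_add, hb, hb']; abel
    | smul r b hb => simp only [mul_smul_comm, map_smul, hb, smul_add]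
  | add a a' ha ha' => simp only [add_mul, map_add, ha, ha']; abel
  | smul r a ha => simp only [smul_mul_assoc, map_smul, ha, smul_add]

lemma ofW_eq_of (w : List (Fin 2)) :
    ofW w = MonoidAlgebra.of ℚ (FreeMonoid (Fin 2)) (FreeMonoid.ofList w) := rfl

lemma Dword_append (f : NCPoly) (u v : List (Fin 2)) :
    Dword f (u ++ v) = Dword f u * ofW v + ofW u * Dword f v := by
  induction u with
  | nil => rw [List.nil_append, Dword, zero_mul, zero_add, ofW_eq_of, FreeMonoid.ofList_nil,
      map_one, one_mul]
  | cons a u ih =>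
    simp only [List.cons_append, Dword, ih, ofW_eq_of, FreeMonoid.ofList_cons,
      FreeMonoid.ofList_append, map_mul]
    noncomm_ring

noncomputable def DmapLinear (f : NCPoly) : NCPoly →ₗ[ℚ] NCPoly :=
  Finsupp.linearCombination ℚ (fun w => Dword f (FreeMonoid.toList w)) ∘ₗ
    (MonoidAlgebra.coeffLinearEquiv ℚ).toLinearMap

lemma DmapLinear_apply (f g : NCPoly) : DmapLinear f g = Dmap f g := rfl

lemma Dmap_of (f : NCPoly) (m : FreeMonoid (Fin 2)) :
    Dmap f (MonoidAlgebra.of ℚ _ m) = Dword f (FreeMonoid.toList m) := by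
  rw [← DmapLinear_apply, DmapLinear]
  simp

lemma isDerivation_Dmap (f : NCPoly) : IsDerivation (DmapLinear f) :=
  MonoidAlgebra.isDerivation_of_map_of_mul fun m n => by
    simp only [DmapLinear_apply, Dmap_of, FreeMonoid.toList_mul, Dword_append]
    rfl

lemma Dmap_Xg (f : NCPoly) : Dmap f Xg = 0 := by
  rw [Xg, Dmap_of]
  simp [Dword]

lemma Dmap_Yg (f : NCPoly) : Dmap f Yg = Yg * f - f * Yg := by
  rw [Yg, Dmap_of]
  simp only [FreeMonoid.toList_of, Dword, if_pos, ofW_eq_of, FreeMonoid.ofList_nil, map_one,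
    mul_one, mul_zero, add_zero]
  rfl

lemma adjoin_Xg_Yg : Algebra.adjoin ℚ {Xg, Yg} = ⊤ := by
  refine Algebra.eq_top_iff.2 fun x => ?_
  induction x using MonoidAlgebra.induction_on with
  | of m =>
    induction m using FreeMonoid.inductionOn' with
    | one => exact map_one (MonoidAlgebra.of ℚ (FreeMonoid (Fin 2))) ▸ Subalgebra.one_mem _
    | of_mul a m ih =>
      rw [map_mul]
      refine Subalgebra.mul_mem _ (Algebra.subset_adjoin ?_) ih
      fin_cases a <;> simp [Xg, Yg]
  | add a b ha hb => exact Subalgebra.add_mem _ ha hb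
  | smul r a ha => exact Subalgebra.smul_mem _ ha r

theorem Dmap_commutator (f g z : NCPoly) :
    Dmap f (Dmap g z) - Dmap g (Dmap f z) = Dmap (pois f g) z := by
  have key : DmapLinear f * DmapLinear g - DmapLinear g * DmapLinear f = DmapLinear (pois f g) := by
    refine ((isDerivation_Dmap f).commutator (isDerivation_Dmap g)).ext_of_adjoin_eq_top
      (isDerivation_Dmap _) adjoin_Xg_Yg ?_
    rintro _ (rfl | rfl)
    · show DmapLinear f (Dmap g Xg) - DmapLinear g (Dmap f Xg) = Dmap (pois f g) Xg
      simp [Dmap_Xg]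
    · show DmapLinear f (Dmap g Yg) - DmapLinear g (Dmap f Yg) = Dmap (pois f g) Yg
      rw [Dmap_Yg, Dmap_Yg, Dmap_Yg, map_sub, map_sub, isDerivation_Dmap f, isDerivation_Dmap f,
        isDerivation_Dmap g, isDerivation_Dmap g]
      simp only [DmapLinear_apply, Dmap_Yg, pois]
      noncomm_ring
  exact LinearMap.congr_fun key z

noncomputable def DmapLie (f : NCPoly) : LieDerivation ℚ NCPoly NCPoly :=
  (isDerivation_Dmap f).toLieDerivation

lemma pois_eq_iharaBracket : pois = iharaBracket DmapLie := rfl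

theorem pois_jacobi (f g h : NCPoly) :
    pois f (pois g h) + pois g (pois h f) + pois h (pois f g) = 0 := by
  rw [pois_eq_iharaBracket]
  exact iharaBracket_jacobi DmapLie
    (fun f g => LieDerivation.ext (Dmap_commutator f g)) f g h

/-- for `f, g` in the free Lie algebra `Lie[x,y]`, the derivations `D_f`
satisfy `[D_f, D_g] = D_{{f,g}}` on `Lie[x,y]`, and consequently the Poisson (Ihara)
bracket satisfies the Jacobi identity on `Lie[x,y]`, making it a Lie algebra. -/
theorem poisson_bracket_lie_algebra :
    (∀ f g z : NCPoly, f ∈ LieSubalgebra.lieSpan ℚ NCPoly {Xg, Yg} →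
      g ∈ LieSubalgebra.lieSpan ℚ NCPoly {Xg, Yg} →
      z ∈ LieSubalgebra.lieSpan ℚ NCPoly {Xg, Yg} →
      Dmap f (Dmap g z) - Dmap g (Dmap f z) = Dmap (pois f g) z) ∧
    (∀ f g h : NCPoly, f ∈ LieSubalgebra.lieSpan ℚ NCPoly {Xg, Yg} →
      g ∈ LieSubalgebra.lieSpan ℚ NCPoly {Xg, Yg} →
      h ∈ LieSubalgebra.lieSpan ℚ NCPoly {Xg, Yg} →
      pois f (pois g h) + pois g (pois h f) + pois h (pois f g) = 0) :=
  ⟨fun f g z _ _ _ => Dmap_commutator f g z, fun f g h _ _ _ => pois_jacobi f g h⟩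
end
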